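/- The MinHash similarity estimator is correct for a uniformly random permutation: if π is a uniformly random permutation of a finite set U, and X, Y ⊆ U are nonempty, then the probability that min_{x∈X} π(x) = min_{y∈Y} π(y) equals the Jaccard similarity |X ∩ Y| / |X ∪ Y|. -/

import Mathlib

/-!
Let `m σ` be the element of `X ∪ Y` that `σ` ranks first. The minima of `σ` over `X` and
over `Y` coincide exactly when `m σ ∈ X ∩ Y`. Precomposing `σ` with the transposition `(u v)`
of two elements of `X ∪ Y` exchanges the events `m σ = u` and `m σ = v`, so `m σ` is uniformly
distributed on `X ∪ Y`, and the probability that it lies in `X ∩ Y` is `|X ∩ Y| / |X ∪ Y|`.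
-/

open Finset

namespace MinHash

variable {U α : Type*} [LinearOrder α]

def argmin (σ : U ≃ α) (S : Finset U) (hS : S.Nonempty) : U :=
  σ.symm (S.inf' hS σ)

theorem argmin_eq_iff {σ : U ≃ α} {S : Finset U} {hS : S.Nonempty} {u : U} :
    argmin σ S hS = u ↔ u ∈ S ∧ ∀ v ∈ S, σ u ≤ σ v := by
  rw [argmin, Equiv.symm_apply_eq]
  constructor
  · intro h
    obtain ⟨w, hw, hmin⟩ := S.exists_mem_eq_inf' hS σ
    rw [h, σ.injective.eq_iff] at hmin
    exact ⟨hmin ▸ hw, fun v hv => h ▸ S.inf'_le σ hv⟩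
  · rintro ⟨hu, hmin⟩
    exact le_antisymm (S.inf'_le σ hu) (S.le_inf' hS σ hmin)

theorem argmin_eq_argmin_iff {σ : U ≃ α} [DecidableEq U] {X Y : Finset U} (hX : X.Nonempty)
    (hY : Y.Nonempty) :
    argmin σ X hX = argmin σ Y hY ↔
      argmin σ (X ∪ Y) (hX.mono subset_union_left) ∈ X ∩ Y := by
  constructor
  · intro h
    obtain ⟨hwX, hminX⟩ := argmin_eq_iff.1 (rfl : argmin σ X hX = _)
    obtain ⟨hwY, hminY⟩ := argmin_eq_iff.1 h.symm
    rw [argmin_eq_iff.2 ⟨mem_union_left Y hwX, fun v hv => (mem_union.1 hv).elim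
      (hminX v) (h ▸ hminY v)⟩]
    exact mem_inter.2 ⟨hwX, hwY⟩
  · intro h
    obtain ⟨hmX, hmY⟩ := mem_inter.1 h
    obtain ⟨-, hmin⟩ := argmin_eq_iff.1 (rfl : argmin σ (X ∪ Y) _ = _)
    rw [argmin_eq_iff.2 ⟨hmX, fun v hv => hmin v (mem_union_left Y hv)⟩,
      argmin_eq_iff.2 ⟨hmY, fun v hv => hmin v (mem_union_right X hv)⟩]

theorem swap_apply_mem_iff [DecidableEq U] {S : Finset U} {u v w : U} (hu : u ∈ S)
    (hv : v ∈ S) : Equiv.swap u v w ∈ S ↔ w ∈ S := by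
  rw [Equiv.swap_apply_def]
  split_ifs with h₁ h₂ <;> simp_all

theorem argmin_swap_trans [DecidableEq U] {σ : U ≃ α} {S : Finset U} {hS : S.Nonempty}
    {u v : U} (hu : u ∈ S) (hv : v ∈ S) :
    argmin ((Equiv.swap u v).trans σ) S hS = Equiv.swap u v (argmin σ S hS) := by
  obtain ⟨hm, hmin⟩ := argmin_eq_iff.1 (rfl : argmin σ S hS = _)
  refine argmin_eq_iff.2 ⟨(swap_apply_mem_iff hu hv).2 hm, fun w hw => ?_⟩
  simpa using hmin _ ((swap_apply_mem_iff hu hv).2 hw)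

variable [Fintype U] [DecidableEq U] [Fintype α]

theorem card_argmin_eq_eq {S : Finset U} (hS : S.Nonempty) {u v : U} (hu : u ∈ S)
    (hv : v ∈ S) :
    #{σ : U ≃ α | argmin σ S hS = u} = #{σ : U ≃ α | argmin σ S hS = v} := by
  refine card_nbij' ((Equiv.swap u v).trans ·) ((Equiv.swap u v).trans ·) ?_ ?_ ?_ ?_
  · intro σ hσ
    simp_all [argmin_swap_trans hu hv]
  · intro σ hσ
    simp_all [argmin_swap_trans hu hv]
  all_goals intro σ _; ext; simp

theorem card_argmin_mem {S T : Finset U} (hS : S.Nonempty) (hTS : T ⊆ S) {u : U} (hu : u ∈ S) :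
    #{σ : U ≃ α | argmin σ S hS ∈ T} = #T * #{σ : U ≃ α | argmin σ S hS = u} := by
  rw [← sum_card_fiberwise_eq_card_filter]
  exact sum_const_nat fun v hv => card_argmin_eq_eq hS (hTS hv) hu

end MinHash

/-- For a uniformly random bijection `π : U ≃ {1,…,|U|}` and nonempty
`X, Y ⊆ U`, the probability that `min_{x∈X} π(x) = min_{y∈Y} π(y)` equals the Jaccard
similarity `|X ∩ Y| / |X ∪ Y|`. -/
theorem stmt7 {U : Type*} [Fintype U] [DecidableEq U]
    (X Y : Finset U) (hX : X.Nonempty) (hY : Y.Nonempty) :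
    ((Finset.univ.filter (fun σ : U ≃ Fin (Fintype.card U) =>
        X.inf' hX (fun u => σ u) = Y.inf' hY (fun u => σ u))).card : ℝ) /
        ((Finset.univ : Finset (U ≃ Fin (Fintype.card U))).card : ℝ)
      = ((X ∩ Y).card : ℝ) / ((X ∪ Y).card : ℝ) := by
  have hXY : (X ∪ Y).Nonempty := hX.mono subset_union_left
  have ⟨u, hu⟩ := hXY
  set c := #{σ : U ≃ Fin (Fintype.card U) | MinHash.argmin σ (X ∪ Y) hXY = u}
  have hagree : #{σ : U ≃ Fin (Fintype.card U) | X.inf' hX σ = Y.inf' hY σ}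
      = #(X ∩ Y) * c := by
    rw [← MinHash.card_argmin_mem hXY inter_subset_union hu]
    exact congrArg card <| filter_congr fun σ _ =>
      σ.symm.injective.eq_iff.symm.trans (MinHash.argmin_eq_argmin_iff hX hY)
  have hall : #(univ : Finset (U ≃ Fin (Fintype.card U))) = #(X ∪ Y) * c := by
    rw [← MinHash.card_argmin_mem hXY Subset.rfl hu,
      filter_true_of_mem fun σ _ => (MinHash.argmin_eq_iff.1 rfl).1]
  have hc : c ≠ 0 :=
    right_ne_zero_of_mul (hall ▸ (univ_nonempty_iff.2 ⟨Fintype.equivFin U⟩).card_pos.ne')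
  rw [hagree, hall]
  push_cast
  exact mul_div_mul_right _ _ (Nat.cast_ne_zero.2 hc)
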